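/- (Pointwise surrogate domination, core of Theorem 2.) Let K ≥ 1 be an integer, w : {−1,1}^K → ℝ, and z ∈ ℝ^K with z_k ≠ 0 for all k. Let a* be the unique element of {−1,1}^K with (a*)_k z_k > 0 for all k. If w(a*) ≥ 0, then the weighted 0-1 risk is bounded by the conditional ψ-risk: Σ_{a ∈ {−1,1}^K, a ≠ a*} w(a) ≤ Σ_{a ∈ {−1,1}^K} w(a) ψ(a ⊙ z). -/

import Mathlib

/-- `Tgen s z = max (s - z 1, ..., s - z K, 0)`, the function `T_s` from the paper. -/
noncomputable def Tgen {K : ℕ} (s : ℝ) (z : Fin K → ℝ) : ℝ :=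
  Finset.fold (· ⊔ ·) 0 (fun k => s - z k) Finset.univ

/-- The generalized ψ-loss: `ψ z = T₁ z - T₀ z`. -/
noncomputable def psiLoss {K : ℕ} (z : Fin K → ℝ) : ℝ :=
  Tgen 1 z - Tgen 0 z

open scoped Classical in
/-- The set of sign vectors `{-1, 1}^K`, as a finset of `Fin K → ℝ`. -/
noncomputable def signVecs (K : ℕ) : Finset (Fin K → ℝ) :=
  Finset.image (fun (b : Fin K → Bool) (k : Fin K) => if b k then (1 : ℝ) else -1)
    Finset.univ

lemma mem_signVecs {K : ℕ} (a : Fin K → ℝ) :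
    a ∈ signVecs K ↔ ∀ k, a k = 1 ∨ a k = -1 := by
  classical
  unfold signVecs
  constructor
  · intro h k
    rw [Finset.mem_image] at h
    obtain ⟨b, -, rfl⟩ := h
    by_cases hb : b k <;> simp [hb]
  · intro h
    rw [Finset.mem_image]
    refine ⟨fun k => decide (a k = 1), Finset.mem_univ _, ?_⟩
    funext k
    rcases h k with h1 | h1 <;> norm_num [h1]

lemma signVecs_nonempty (K : ℕ) : (signVecs K).Nonempty :=
  ⟨fun _ => 1, (mem_signVecs _).mpr fun _ => Or.inl rfl⟩

/-! Off `a*` some coordinate of `a ⊙ z` is negative; as soon as one of the terms `-z k` of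
`T₀ z` is nonnegative, raising the threshold from `0` to `1` raises the maximum by exactly `1`,
so `ψ (a ⊙ z) = 1` and those summands agree on both sides. The remaining summand
`w a* · ψ (a* ⊙ z)` is nonnegative because `T_s` is monotone in `s`. -/

section Tgen

variable {K : ℕ}

theorem Tgen_le_iff (s c : ℝ) (z : Fin K → ℝ) :
    Tgen s z ≤ c ↔ 0 ≤ c ∧ ∀ k, s - z k ≤ c := by
  simp [Tgen, Finset.fold_max_le]

theorem Tgen_nonneg (s : ℝ) (z : Fin K → ℝ) : 0 ≤ Tgen s z :=
  ((Tgen_le_iff s _ z).mp le_rfl).1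

theorem sub_le_Tgen (s : ℝ) (z : Fin K → ℝ) (k : Fin K) : s - z k ≤ Tgen s z :=
  ((Tgen_le_iff s _ z).mp le_rfl).2 k

theorem Tgen_mono (z : Fin K → ℝ) : Monotone fun s => Tgen s z := fun s s' hs =>
  (Tgen_le_iff s _ z).mpr
    ⟨Tgen_nonneg s' z, fun k => (sub_le_sub_right hs _).trans (sub_le_Tgen s' z k)⟩

theorem Tgen_add_of_exists_nonneg {s : ℝ} {z : Fin K → ℝ} (h : ∃ k, 0 ≤ s - z k)
    {t : ℝ} (ht : 0 ≤ t) : Tgen (s + t) z = Tgen s z + t := by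
  obtain ⟨k₀, hk₀⟩ := h
  apply le_antisymm
  · refine (Tgen_le_iff _ _ z).mpr ⟨by linarith [Tgen_nonneg s z], fun k => ?_⟩
    linarith [sub_le_Tgen s z k]
  · rw [← le_sub_iff_add_le]
    refine (Tgen_le_iff _ _ z).mpr ⟨by linarith [sub_le_Tgen (s + t) z k₀], fun k => ?_⟩
    linarith [sub_le_Tgen (s + t) z k]

end Tgen

theorem psiLoss_nonneg {K : ℕ} (z : Fin K → ℝ) : 0 ≤ psiLoss z :=
  sub_nonneg.mpr (Tgen_mono z zero_le_one)

theorem psiLoss_eq_one_of_exists_nonpos {K : ℕ} {z : Fin K → ℝ} (h : ∃ k, z k ≤ 0) :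
    psiLoss z = 1 := by
  obtain ⟨k, hk⟩ := h
  have := Tgen_add_of_exists_nonneg (s := 0) ⟨k, by linarith⟩ zero_le_one
  rw [zero_add] at this
  rw [psiLoss, this, add_sub_cancel_left]

theorem exists_eq_neg_of_mem_signVecs_of_ne {K : ℕ} {a b : Fin K → ℝ} (ha : a ∈ signVecs K)
    (hb : b ∈ signVecs K) (hab : a ≠ b) : ∃ k, a k = -b k := by
  by_contra! h
  refine hab (funext fun k => ?_)
  have hk := h k
  rcases (mem_signVecs a).mp ha k with hak | hak <;>
    rcases (mem_signVecs b).mp hb k with hbk | hbk <;>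
    rw [hak, hbk] at hk ⊢ <;> norm_num at hk

open scoped Classical in
theorem stmt14_general (K : ℕ) (w : (Fin K → ℝ) → ℝ) (z : Fin K → ℝ)
    (astar : Fin K → ℝ) (hmem : astar ∈ signVecs K)
    (hstar : ∀ k, 0 < astar k * z k) (hw : 0 ≤ w astar) :
    ∑ a ∈ (signVecs K).filter (fun a => a ≠ astar), w a
      ≤ ∑ a ∈ signVecs K, w a * psiLoss (fun k => a k * z k) := by
  have hloss : ∀ a ∈ (signVecs K).erase astar, w a * psiLoss (fun k => a k * z k) = w a := by
    intro a ha
    obtain ⟨hne, ha⟩ := Finset.mem_erase.mp ha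
    obtain ⟨k, hk⟩ := exists_eq_neg_of_mem_signVecs_of_ne ha hmem hne
    have hneg : a k * z k ≤ 0 := by
      rw [hk, neg_mul]
      exact neg_nonpos.mpr (hstar k).le
    rw [psiLoss_eq_one_of_exists_nonpos ⟨k, hneg⟩, mul_one]
  rw [Finset.filter_ne', ← Finset.sum_erase_add _ _ hmem, Finset.sum_congr rfl hloss]
  exact le_add_of_nonneg_right (mul_nonneg hw (psiLoss_nonneg _))

open scoped Classical in
theorem stmt14 (K : ℕ) (hK : 1 ≤ K) (w : (Fin K → ℝ) → ℝ) (z : Fin K → ℝ)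
    (hz : ∀ k, z k ≠ 0) (astar : Fin K → ℝ) (hmem : astar ∈ signVecs K)
    (hstar : ∀ k, 0 < astar k * z k) (hw : 0 ≤ w astar) :
    ∑ a ∈ (signVecs K).filter (fun a => a ≠ astar), w a
      ≤ ∑ a ∈ signVecs K, w a * psiLoss (fun k => a k * z k) :=
  stmt14_general K w z astar hmem hstar hw
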